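/- arXiv:1501.00219 — 3 statements merged into one kernel-verified Lean document; each statement's English description precedes it below -/
import Mathlib

section
/- Let N ≥ 2 and let X^1, …, X^N be the random vectors defined from the i.i.d. standard normal family θ_{i,k} by X^k = Σ_{i=1}^n λ_i^{1/2} θ_{i,k} u_i. Then the expected squared Frobenius-norm error of the spectral diagonal approximation D^N satisfies E[‖C − D^N‖_F²] = (2/(N−1)) Σ_{i=1}^n λ_i², where C = Σ_{i=1}^n λ_i u_i u_iᵀ. -/
/-!
In the eigenbasis `u`, `C - D^N` is diagonal with entries `λᵢ - cᵢᵢ`, so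
`‖C - D^N‖_F² = ∑ᵢ (λᵢ - cᵢᵢ)²`; moreover `cᵢᵢ = λᵢ Sᵢ`, where `Sᵢ` is the sample variance of the
i.i.d. standard normal sample `(θᵢₖ)ₖ`. The sample variance is the quadratic form `θᵀ A θ` with
`A = (I - 𝟙𝟙ᵀ/N)/(N - 1)`, and Isserlis' formula
`E[θₖθₗθₚθ_q] = δₖₗδₚ_q + δₖₚδₗ_q + δₖ_qδₗₚ` gives
`E[(θᵀ A θ - 1)²] = (tr A - 1)² + 2 tr A² = 2/(N - 1)`.
-/

open MeasureTheory ProbabilityTheory Finset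
open scoped NNReal ENNReal

section GaussianMoments

open Polynomial

lemma iteratedDeriv_eval_mul_exp (v : ℝ) (n : ℕ) (p : ℝ[X]) :
    iteratedDeriv n (fun t ↦ p.eval t * Real.exp (v * t ^ 2 / 2))
      = fun t ↦
        ((fun q ↦ derivative q + C v * X * q)^[n] p).eval t * Real.exp (v * t ^ 2 / 2) := by
  induction n generalizing p with
  | zero => simp
  | succ n ih =>
    rw [iteratedDeriv_succ', Function.iterate_succ_apply, ← ih]
    congr 1
    funext t
    have he : HasDerivAt (fun t ↦ Real.exp (v * t ^ 2 / 2))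
        (v * t * Real.exp (v * t ^ 2 / 2)) t := by
      convert ((hasDerivAt_pow 2 t).const_mul v).div_const 2 |>.exp using 1; ring
    rw [((p.hasDerivAt t).fun_mul he).deriv]
    simp only [eval_add, eval_mul, eval_C, eval_X]
    ring

-- The moments of `N(0, v)` are the derivatives at `0` of its mgf `exp (v t² / 2)`.
lemma integral_pow_centered_gaussianReal (v : ℝ≥0) (n : ℕ) :
    ∫ x, x ^ n ∂gaussianReal 0 v = ((fun q ↦ derivative q + C (v : ℝ) * X * q)^[n] 1).eval 0 := by
  have hmgf := iteratedDeriv_mgf_zero (X := fun x : ℝ ↦ x) (μ := gaussianReal 0 v) (by simp) n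
  have h := congr_fun (iteratedDeriv_eval_mul_exp v n 1) 0
  rw [mgf_fun_id_gaussianReal] at hmgf
  simp only [zero_mul, zero_add, Pi.pow_apply, eval_one, one_mul] at hmgf h
  simpa [← hmgf] using h

variable {Ω : Type*} [MeasurableSpace Ω] {μ : Measure Ω} {Z : Ω → ℝ}

lemma ProbabilityTheory.HasLaw.integral_pow_gaussianReal (hZ : HasLaw Z (gaussianReal 0 1) μ)
    (n : ℕ) :
    ∫ ω, Z ω ^ n ∂μ = ((fun q ↦ derivative q + X * q)^[n] 1).eval 0 := by
  simpa using (hZ.integral_comp (f := fun x ↦ x ^ n) (by fun_prop)).trans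
    (integral_pow_centered_gaussianReal 1 n)

lemma ProbabilityTheory.HasLaw.memLp_gaussianReal (hZ : HasLaw Z (gaussianReal 0 1) μ)
    (p : ℝ≥0∞) (hp : p ≠ ∞) : MemLp Z p μ := by
  have := memLp_id_gaussianReal' (μ := 0) (v := 1) p hp
  rw [← hZ.map_eq] at this
  exact (memLp_map_measure_iff aestronglyMeasurable_id hZ.aemeasurable).1 this

lemma ProbabilityTheory.HasLaw.integral_gaussianReal (hZ : HasLaw Z (gaussianReal 0 1) μ) :
    ∫ ω, Z ω ∂μ = 0 := by
  simpa using hZ.integral_pow_gaussianReal 1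

lemma ProbabilityTheory.HasLaw.integral_sq_gaussianReal (hZ : HasLaw Z (gaussianReal 0 1) μ) :
    ∫ ω, Z ω ^ 2 ∂μ = 1 := by
  rw [hZ.integral_pow_gaussianReal]; simp [Function.iterate_succ_apply']

lemma ProbabilityTheory.HasLaw.integral_pow_four_gaussianReal
    (hZ : HasLaw Z (gaussianReal 0 1) μ) : ∫ ω, Z ω ^ 4 ∂μ = 3 := by
  rw [hZ.integral_pow_gaussianReal]; simp [Function.iterate_succ_apply']; norm_num

end GaussianMoments

section SampleVariance

variable {ι : Type*} [Fintype ι]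

noncomputable def sampleVariance (y : ι → ℝ) : ℝ :=
  1 / ((Fintype.card ι : ℝ) - 1) * ∑ k, (y k - 1 / (Fintype.card ι : ℝ) * ∑ l, y l) ^ 2

lemma sampleVariance_const_mul (r : ℝ) (y : ι → ℝ) :
    sampleVariance (fun k ↦ r * y k) = r ^ 2 * sampleVariance y := by
  have hcenter : ∀ k, r * y k - 1 / (Fintype.card ι : ℝ) * ∑ l, r * y l =
      r * (y k - 1 / (Fintype.card ι : ℝ) * ∑ l, y l) := fun k ↦ by rw [← mul_sum]; ring
  simp_rw [sampleVariance, hcenter, mul_pow, ← mul_sum]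
  ring

lemma sum_sq_sub_mean (y : ι → ℝ) :
    ∑ k, (y k - 1 / (Fintype.card ι : ℝ) * ∑ l, y l) ^ 2 =
      ∑ k, y k ^ 2 - 1 / (Fintype.card ι : ℝ) * (∑ k, y k) ^ 2 := by
  rcases isEmpty_or_nonempty ι with hι | hι
  · simp
  have hn : (Fintype.card ι : ℝ) ≠ 0 := by positivity
  simp only [sub_sq, sum_add_distrib, sum_sub_distrib, ← sum_mul, ← mul_sum, sum_const, card_univ,
    nsmul_eq_mul]
  field_simp
  ring

lemma sampleVariance_eq_quadForm [DecidableEq ι] (y : ι → ℝ) :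
    sampleVariance y = ∑ k, ∑ l,
      ((if k = l then 1 else 0) - 1 / (Fintype.card ι : ℝ)) / (Fintype.card ι - 1) * y k * y l := by
  have hterm : ∀ k l, ((if k = l then 1 else 0) - 1 / (Fintype.card ι : ℝ)) /
      (Fintype.card ι - 1) * y k * y l = 1 / ((Fintype.card ι : ℝ) - 1) *
        ((if k = l then y k * y l else 0) - 1 / (Fintype.card ι : ℝ) * (y k * y l)) := by
    intro k l; split_ifs <;> ring
  rw [sampleVariance, sum_sq_sub_mean]
  simp only [hterm, ← mul_sum, sum_sub_distrib, sum_ite_eq, mem_univ, if_true, sq, sum_mul_sum]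

lemma sum_sum_sq_ite_sub_inv_card [DecidableEq ι] [Nonempty ι] :
    ∑ k : ι, ∑ l : ι, ((if k = l then (1 : ℝ) else 0) - 1 / (Fintype.card ι : ℝ)) ^ 2 =
      (Fintype.card ι : ℝ) - 1 := by
  have hn : (Fintype.card ι : ℝ) ≠ 0 := by positivity
  have hterm : ∀ k l : ι, ((if k = l then (1 : ℝ) else 0) - 1 / (Fintype.card ι : ℝ)) ^ 2 =
      (if k = l then 1 - 2 / (Fintype.card ι : ℝ) else 0) + 1 / (Fintype.card ι : ℝ) ^ 2 := by
    intro k l; split_ifs <;> ring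
  simp only [hterm, sum_add_distrib, sum_ite_eq, mem_univ, if_true, sum_const, card_univ,
    nsmul_eq_mul]
  field_simp
  ring

end SampleVariance

section Probability

variable {Ω : Type*} [MeasurableSpace Ω] {μ : Measure Ω}

section Isserlis

variable {ι : Type*} {Y : ι → Ω → ℝ}

lemma integral_mul_of_gaussianReal [DecidableEq ι] (hY : iIndepFun Y μ)
    (hlaw : ∀ k, HasLaw (Y k) (gaussianReal 0 1) μ) (k l : ι) :
    ∫ ω, Y k ω * Y l ω ∂μ = if k = l then 1 else 0 := by
  rcases eq_or_ne k l with rfl | hkl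
  · simpa [← sq] using (hlaw k).integral_sq_gaussianReal
  · rw [(hY.indepFun hkl).integral_fun_mul_eq_mul_integral
      (hlaw k).aemeasurable.aestronglyMeasurable (hlaw l).aemeasurable.aestronglyMeasurable,
      (hlaw k).integral_gaussianReal, zero_mul, if_neg hkl]

lemma integral_mul_mul_mul_eq_zero_of_ne (hY : iIndepFun Y μ)
    (hlaw : ∀ k, HasLaw (Y k) (gaussianReal 0 1) μ) {k l p q : ι}
    (hl : l ≠ k) (hp : p ≠ k) (hq : q ≠ k) :
    ∫ ω, Y k ω * Y l ω * Y p ω * Y q ω ∂μ = 0 := by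
  classical
  have hind : IndepFun (Y k) (fun ω ↦ Y l ω * Y p ω * Y q ω) μ :=
    (hY.indepFun_finset₀ {k} {l, p, q} (by simp [hl.symm, hp.symm, hq.symm])
      fun j ↦ (hlaw j).aemeasurable).comp
      (φ := fun x : ({k} : Finset ι) → ℝ ↦ x ⟨k, mem_singleton_self k⟩)
      (ψ := fun x : ({l, p, q} : Finset ι) → ℝ ↦ x ⟨l, by simp⟩ * x ⟨p, by simp⟩ * x ⟨q, by simp⟩)
      (by fun_prop) (by fun_prop)
  simp only [mul_assoc] at hind ⊢
  have hm : ∀ j, AEMeasurable (Y j) μ := fun j ↦ (hlaw j).aemeasurable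
  rw [hind.integral_fun_mul_eq_mul_integral (by fun_prop) (by fun_prop),
    (hlaw k).integral_gaussianReal, zero_mul]

lemma integral_sq_mul_sq_of_ne (hY : iIndepFun Y μ)
    (hlaw : ∀ k, HasLaw (Y k) (gaussianReal 0 1) μ) {k l : ι} (h : k ≠ l) :
    ∫ ω, Y k ω ^ 2 * Y l ω ^ 2 ∂μ = 1 := by
  have hm : ∀ j, AEMeasurable (Y j) μ := fun j ↦ (hlaw j).aemeasurable
  have := ((hY.indepFun h).comp (φ := fun x ↦ x ^ 2) (ψ := fun x ↦ x ^ 2) (by fun_prop)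
    (by fun_prop)).integral_fun_mul_eq_mul_integral (by fun_prop) (by fun_prop)
  simpa [(hlaw k).integral_sq_gaussianReal, (hlaw l).integral_sq_gaussianReal] using this

theorem integral_mul_mul_mul_of_gaussianReal [DecidableEq ι] (hY : iIndepFun Y μ)
    (hlaw : ∀ k, HasLaw (Y k) (gaussianReal 0 1) μ) (k l p q : ι) :
    ∫ ω, Y k ω * Y l ω * Y p ω * Y q ω ∂μ =
      (if k = l then 1 else 0) * (if p = q then 1 else 0) +
      (if k = p then 1 else 0) * (if l = q then 1 else 0) +
      (if k = q then 1 else 0) * (if l = p then 1 else 0) := by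
  -- Either some index occurs only once, and independence makes the integral vanish,
  -- or the indices are all equal or come in two distinct pairs.
  rcases eq_or_ne l k with rfl | hlk
  · rcases eq_or_ne q p with rfl | hqp
    · rcases eq_or_ne q l with rfl | hql
      · convert (hlaw q).integral_pow_four_gaussianReal using 2
        · funext ω; ring
        · norm_num
      · convert integral_sq_mul_sq_of_ne hY hlaw hql.symm using 2
        · funext ω; ring
        · simp [hql.symm]
    · rcases eq_or_ne p l with rfl | hpl
      · convert integral_mul_mul_mul_eq_zero_of_ne hY hlaw hqp.symm hqp.symm hqp.symm using 2
        · funext ω; ring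
        · simp [hqp.symm]
      · convert integral_mul_mul_mul_eq_zero_of_ne hY hlaw hpl.symm hpl.symm hqp using 2
        · funext ω; ring
        · simp [hpl.symm, hqp.symm]
  · rcases eq_or_ne p k with rfl | hpk
    · rcases eq_or_ne q l with rfl | hql
      · convert integral_sq_mul_sq_of_ne hY hlaw hlk.symm using 2
        · funext ω; ring
        · simp [hlk, hlk.symm]
      · convert integral_mul_mul_mul_eq_zero_of_ne hY hlaw hlk.symm hlk.symm hql using 2
        · funext ω; ring
        · simp [hlk, hlk.symm, hql.symm]
    · rcases eq_or_ne q k with rfl | hqk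
      · rcases eq_or_ne p l with rfl | hpl
        · convert integral_sq_mul_sq_of_ne hY hlaw hlk using 2
          · funext ω; ring
          · simp [hlk, hlk.symm]
        · convert integral_mul_mul_mul_eq_zero_of_ne hY hlaw hlk.symm hpl hlk.symm using 2
          · funext ω; ring
          · simp [hlk, hlk.symm, hpl.symm]
      · simpa [hlk.symm, hpk.symm, hqk.symm] using
          integral_mul_mul_mul_eq_zero_of_ne hY hlaw hlk hpk hqk

end Isserlis

section QuadraticForm

variable {ι : Type*} [Fintype ι] {Y : ι → Ω → ℝ}

lemma memLp_two_mul_of_memLp_four {f g : Ω → ℝ} (hf : MemLp f 4 μ) (hg : MemLp g 4 μ) :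
    MemLp (fun ω ↦ f ω * g ω) 2 μ :=
  have : ENNReal.HolderTriple 4 4 2 := ⟨by
    rw [show (4 : ℝ≥0∞) = 2 * 2 by norm_num, ENNReal.mul_inv (by simp) (by simp), ← add_mul,
      ENNReal.inv_two_add_inv_two, one_mul]⟩
  hg.mul' hf

lemma memLp_two_quadForm (h4 : ∀ k, MemLp (Y k) 4 μ) (A : ι → ι → ℝ) :
    MemLp (fun ω ↦ ∑ k, ∑ l, A k l * Y k ω * Y l ω) 2 μ :=
  memLp_finsetSum _ fun k _ ↦ memLp_finsetSum _ fun l _ ↦ by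
    simpa only [mul_assoc] using (memLp_two_mul_of_memLp_four (h4 k) (h4 l)).const_mul (A k l)

lemma integral_quadForm_of_gaussianReal (hY : iIndepFun Y μ)
    (hlaw : ∀ k, HasLaw (Y k) (gaussianReal 0 1) μ) (A : ι → ι → ℝ) :
    ∫ ω, ∑ k, ∑ l, A k l * Y k ω * Y l ω ∂μ = ∑ k, A k k := by
  classical
  have hint : ∀ k l, Integrable (fun ω ↦ A k l * (Y k ω * Y l ω)) μ := fun k l ↦
    (((hlaw k).memLp_gaussianReal 2 (by simp)).integrable_mul
      ((hlaw l).memLp_gaussianReal 2 (by simp))).const_mul _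
  simp_rw [mul_assoc, integral_finsetSum _ fun _ _ ↦ integrable_finsetSum _ fun _ _ ↦ hint _ _,
    integral_finsetSum _ fun _ _ ↦ hint _ _, integral_const_mul,
    integral_mul_of_gaussianReal hY hlaw]
  simp

lemma integral_sq_quadForm_of_gaussianReal (hY : iIndepFun Y μ)
    (hlaw : ∀ k, HasLaw (Y k) (gaussianReal 0 1) μ) (A : ι → ι → ℝ) :
    ∫ ω, (∑ k, ∑ l, A k l * Y k ω * Y l ω) ^ 2 ∂μ =
      (∑ k, A k k) ^ 2 + ∑ k, ∑ l, A k l * (A k l + A l k) := by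
  classical
  have h4 : ∀ k, MemLp (Y k) 4 μ := fun k ↦ (hlaw k).memLp_gaussianReal 4 (by simp)
  have hexp : ∀ ω, (∑ k, ∑ l, A k l * Y k ω * Y l ω) ^ 2 =
      ∑ k, ∑ l, ∑ p, ∑ q, A k l * A p q * (Y k ω * Y l ω * Y p ω * Y q ω) := fun ω ↦ by
    simp only [sq, sum_mul, mul_sum]
    refine sum_congr rfl fun k _ ↦ sum_congr rfl fun l _ ↦ sum_congr rfl fun p _ ↦
      sum_congr rfl fun q _ ↦ by ring
  have hint : ∀ k l p q, Integrable
      (fun ω ↦ A k l * A p q * (Y k ω * Y l ω * Y p ω * Y q ω)) μ := fun k l p q ↦ by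
    simpa only [Pi.mul_apply, mul_assoc] using
      ((memLp_two_mul_of_memLp_four (h4 k) (h4 l)).integrable_mul
        (memLp_two_mul_of_memLp_four (h4 p) (h4 q))).const_mul (A k l * A p q)
  simp_rw [hexp, integral_finsetSum _ fun _ _ ↦ integrable_finsetSum _ fun _ _ ↦
    integrable_finsetSum _ fun _ _ ↦ integrable_finsetSum _ fun _ _ ↦ hint _ _ _ _,
    integral_finsetSum _ fun _ _ ↦ integrable_finsetSum _ fun _ _ ↦
    integrable_finsetSum _ fun _ _ ↦ hint _ _ _ _,
    integral_finsetSum _ fun _ _ ↦ integrable_finsetSum _ fun _ _ ↦ hint _ _ _ _,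
    integral_finsetSum _ fun _ _ ↦ hint _ _ _ _, integral_const_mul,
    integral_mul_mul_mul_of_gaussianReal hY hlaw]
  simp only [mul_ite, mul_one, mul_zero, mul_add, sum_add_distrib, sum_ite_eq, mem_univ,
    ↓reduceIte, sum_ite_irrel, sum_const_zero, sq, sum_mul_sum]
  ring

lemma integral_sq_quadForm_sub_one_of_gaussianReal [IsProbabilityMeasure μ]
    (hY : iIndepFun Y μ) (hlaw : ∀ k, HasLaw (Y k) (gaussianReal 0 1) μ) (A : ι → ι → ℝ) :
    ∫ ω, (∑ k, ∑ l, A k l * Y k ω * Y l ω - 1) ^ 2 ∂μ =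
      (∑ k, A k k - 1) ^ 2 + ∑ k, ∑ l, A k l * (A k l + A l k) := by
  have hQ := memLp_two_quadForm (fun k ↦ (hlaw k).memLp_gaussianReal 4 (by simp)) A
  have hQ1 : Integrable (fun ω ↦ 2 * ∑ k, ∑ l, A k l * Y k ω * Y l ω) μ :=
    (hQ.integrable one_le_two).const_mul 2
  have hQ2 : Integrable (fun ω ↦ (∑ k, ∑ l, A k l * Y k ω * Y l ω) ^ 2 -
      2 * ∑ k, ∑ l, A k l * Y k ω * Y l ω) μ := hQ.integrable_sq.sub hQ1
  simp_rw [sub_sq, mul_one, one_pow]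
  rw [integral_add hQ2 (integrable_const 1), integral_sub hQ.integrable_sq hQ1,
    integral_const_mul, integral_sq_quadForm_of_gaussianReal hY hlaw,
    integral_quadForm_of_gaussianReal hY hlaw]
  simp only [integral_const, probReal_univ, smul_eq_mul, mul_one]
  ring

end QuadraticForm

section GaussianSampleVariance

variable {ι : Type*} [Fintype ι] {Y : ι → Ω → ℝ}

lemma memLp_two_sampleVariance (hlaw : ∀ k, HasLaw (Y k) (gaussianReal 0 1) μ) :
    MemLp (fun ω ↦ sampleVariance (Y · ω)) 2 μ := by
  classical
  simp_rw [sampleVariance_eq_quadForm]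
  exact memLp_two_quadForm (fun k ↦ (hlaw k).memLp_gaussianReal 4 (by simp)) _

theorem integral_sq_sampleVariance_sub_one [IsProbabilityMeasure μ]
    (hcard : 2 ≤ Fintype.card ι) (hY : iIndepFun Y μ)
    (hlaw : ∀ k, HasLaw (Y k) (gaussianReal 0 1) μ) :
    ∫ ω, (sampleVariance (Y · ω) - 1) ^ 2 ∂μ = 2 / ((Fintype.card ι : ℝ) - 1) := by
  classical
  have : Nonempty ι := Fintype.card_pos_iff.1 (by omega)
  set n : ℝ := (Fintype.card ι : ℝ) with hn
  have hn0 : n ≠ 0 := by positivity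
  have hn1 : n - 1 ≠ 0 := by
    have : (2 : ℝ) ≤ n := by rw [hn]; exact_mod_cast hcard
    linarith
  set A : ι → ι → ℝ := fun k l ↦ ((if k = l then (1 : ℝ) else 0) - 1 / n) / (n - 1) with hA
  have hterm : ∀ k l, A k l * (A k l + A l k) =
      2 * (((if k = l then (1 : ℝ) else 0) - 1 / n) / (n - 1)) ^ 2 := fun k l ↦ by
    simp only [hA, eq_comm (a := l)]; ring
  have hSA : ∀ ω, sampleVariance (Y · ω) = ∑ k, ∑ l, A k l * Y k ω * Y l ω := fun ω ↦
    sampleVariance_eq_quadForm _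
  simp_rw [hSA]
  rw [integral_sq_quadForm_sub_one_of_gaussianReal hY hlaw]
  simp only [hterm, ← mul_sum, div_pow, ← sum_div, hn, sum_sum_sq_ite_sub_inv_card]
  simp only [hA, if_true, sum_const, card_univ, nsmul_eq_mul, ← hn]
  field_simp
  ring

end GaussianSampleVariance
end Probability

section Orthonormal

variable {ι α : Type*} [Fintype ι] [Fintype α] [DecidableEq ι] {u : ι → α → ℝ}

lemma sum_mul_sum_mul_of_orthonormal
    (horth : ∀ i j, ∑ a, u i a * u j a = if i = j then 1 else 0) (w : ι → ℝ) (i : ι) :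
    ∑ a, u i a * ∑ j, w j * u j a = w i := by
  simp_rw [mul_sum]
  rw [sum_comm]
  simp_rw [mul_left_comm (u i _), ← mul_sum, horth]
  simp

lemma sum_sq_sum_mul_of_orthonormal
    (horth : ∀ i j, ∑ a, u i a * u j a = if i = j then 1 else 0) (w : ι → ℝ) :
    ∑ a, (∑ i, w i * u i a) ^ 2 = ∑ i, w i ^ 2 := by
  simp_rw [sq, sum_mul_sum]
  rw [sum_comm]
  refine sum_congr rfl fun i _ ↦ ?_
  rw [sum_comm]
  simp_rw [mul_mul_mul_comm (w i) (u i _), ← mul_sum, horth]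
  simp

lemma sum_sum_sq_sum_mul_mul_of_orthonormal
    (horth : ∀ i j, ∑ a, u i a * u j a = if i = j then 1 else 0) (d : ι → ℝ) :
    ∑ a, ∑ b, (∑ i, d i * u i a * u i b) ^ 2 = ∑ i, d i ^ 2 := by
  have hnorm : ∀ i, ∑ a, u i a ^ 2 = 1 := fun i ↦ by simpa [sq] using horth i i
  simp_rw [sum_sq_sum_mul_of_orthonormal horth, mul_pow]
  rw [sum_comm]
  simp_rw [← mul_sum, hnorm, mul_one]

end Orthonormal

theorem spectral_diagonal_expected_squared_error_general
    {Ω : Type*} [MeasureSpace Ω] [IsProbabilityMeasure (ℙ : Measure Ω)]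
    (n N : ℕ) (hN : 2 ≤ N)
    (θ : Fin n × Fin N → Ω → ℝ)
    (hindep : iIndepFun θ ℙ)
    (hgauss : ∀ p, Measure.map (θ p) ℙ = gaussianReal 0 1)
    (u : Fin n → Fin n → ℝ)
    (horth : ∀ i j, (∑ a, u i a * u j a) = if i = j then (1 : ℝ) else 0)
    (lam : Fin n → ℝ) (hlam : ∀ i, 0 ≤ lam i)
    (X : Fin N → Ω → Fin n → ℝ)
    (hX : ∀ k ω a, X k ω a = ∑ i, Real.sqrt (lam i) * θ (i, k) ω * u i a)
    (Xbar : Ω → Fin n → ℝ)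
    (hXbar : ∀ ω a, Xbar ω a = (1 / (N : ℝ)) * ∑ k, X k ω a)
    (c : Fin n → Ω → ℝ)
    (hc : ∀ i ω, c i ω = (1 / ((N : ℝ) - 1)) *
      ∑ k, ((∑ a, u i a * X k ω a) - (∑ a, u i a * Xbar ω a)) ^ 2)
    (DN : Ω → Matrix (Fin n) (Fin n) ℝ)
    (hDN : ∀ ω a b, DN ω a b = ∑ i, c i ω * u i a * u i b)
    (C : Matrix (Fin n) (Fin n) ℝ)
    (hC : ∀ a b, C a b = ∑ i, lam i * u i a * u i b) :
    ∫ ω, (∑ a, ∑ b, (C a b - DN ω a b) ^ 2) ∂ℙ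
      = (2 / ((N : ℝ) - 1)) * ∑ i, lam i ^ 2 := by
  have hproj : ∀ i k ω, ∑ a, u i a * X k ω a = √(lam i) * θ (i, k) ω := fun i k ω ↦ by
    simp_rw [hX]
    exact sum_mul_sum_mul_of_orthonormal horth (fun j ↦ √(lam j) * θ (j, k) ω) i
  have hmean : ∀ i ω, ∑ a, u i a * Xbar ω a = 1 / (N : ℝ) * ∑ k, √(lam i) * θ (i, k) ω :=
    fun i ω ↦ by
      simp_rw [hXbar, mul_left_comm (u i _), mul_sum (s := univ) (f := fun k ↦ X k ω _)]
      rw [← mul_sum, sum_comm]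
      simp_rw [hproj]
  have hcS : ∀ i ω, c i ω = lam i * sampleVariance (fun k ↦ θ (i, k) ω) := fun i ω ↦ by
    rw [hc, ← Real.sq_sqrt (hlam i), ← sampleVariance_const_mul]
    simp [sampleVariance, hproj, hmean]
  have hfrob : ∀ ω, ∑ a, ∑ b, (C a b - DN ω a b) ^ 2 =
      ∑ i, lam i ^ 2 * (sampleVariance (fun k ↦ θ (i, k) ω) - 1) ^ 2 := fun ω ↦ by
    have hdiff : ∀ a b, C a b - DN ω a b = ∑ i, (lam i - c i ω) * u i a * u i b := fun a b ↦ by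
      simp only [hC, hDN, ← sum_sub_distrib, sub_mul]
    simp_rw [hdiff, sum_sum_sq_sum_mul_mul_of_orthonormal horth, hcS]
    exact sum_congr rfl fun i _ ↦ by ring
  have hlaw : ∀ p, HasLaw (θ p) (gaussianReal 0 1) ℙ := fun p ↦
    ⟨.of_map_ne_zero (by rw [hgauss]; exact IsProbabilityMeasure.ne_zero _), hgauss p⟩
  have hrow : ∀ i, iIndepFun (fun k ↦ θ (i, k)) ℙ := fun i ↦
    hindep.precomp fun k l h ↦ (Prod.mk.inj h).2
  have hint : ∀ i, Integrable (fun ω ↦ (sampleVariance (fun k ↦ θ (i, k) ω) - 1) ^ 2) ℙ :=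
    fun i ↦ ((memLp_two_sampleVariance fun k ↦ hlaw (i, k)).sub (memLp_const 1)).integrable_sq
  simp_rw [hfrob]
  rw [integral_finsetSum _ fun i _ ↦ (hint i).const_mul _, mul_sum]
  refine sum_congr rfl fun i _ ↦ ?_
  rw [integral_const_mul, integral_sq_sampleVariance_sub_one (by simpa using hN) (hrow i)
    fun k ↦ hlaw (i, k), Fintype.card_fin]
  ring

/-- expected squared Frobenius error of the spectral diagonal approximation. -/
theorem spectral_diagonal_expected_squared_error
    {Ω : Type*} [MeasureSpace Ω] [IsProbabilityMeasure (ℙ : Measure Ω)]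
    (n N : ℕ) (hn : 1 ≤ n) (hN : 2 ≤ N)
    (θ : Fin n × Fin N → Ω → ℝ)
    (hmeas : ∀ p, Measurable (θ p))
    (hindep : iIndepFun θ ℙ)
    (hgauss : ∀ p, Measure.map (θ p) ℙ = gaussianReal 0 1)
    (u : Fin n → Fin n → ℝ)
    (horth : ∀ i j, (∑ a, u i a * u j a) = if i = j then (1 : ℝ) else 0)
    (lam : Fin n → ℝ) (hlam : ∀ i, 0 ≤ lam i)
    (X : Fin N → Ω → Fin n → ℝ)
    (hX : ∀ k ω a, X k ω a = ∑ i, Real.sqrt (lam i) * θ (i, k) ω * u i a)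
    (Xbar : Ω → Fin n → ℝ)
    (hXbar : ∀ ω a, Xbar ω a = (1 / (N : ℝ)) * ∑ k, X k ω a)
    (c : Fin n → Ω → ℝ)
    (hc : ∀ i ω, c i ω = (1 / ((N : ℝ) - 1)) *
      ∑ k, ((∑ a, u i a * X k ω a) - (∑ a, u i a * Xbar ω a)) ^ 2)
    (DN : Ω → Matrix (Fin n) (Fin n) ℝ)
    (hDN : ∀ ω a b, DN ω a b = ∑ i, c i ω * u i a * u i b)
    (C : Matrix (Fin n) (Fin n) ℝ)
    (hC : ∀ a b, C a b = ∑ i, lam i * u i a * u i b) :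
    ∫ ω, (∑ a, ∑ b, (C a b - DN ω a b) ^ 2) ∂ℙ
      = (2 / ((N : ℝ) - 1)) * ∑ i, lam i ^ 2 :=
  spectral_diagonal_expected_squared_error_general n N hN θ hindep hgauss u horth lam hlam X hX Xbar
    hXbar c hc DN hDN C hC
end

section
/- Let N ≥ 2 and let X^1, …, X^N be the random vectors defined from the i.i.d. standard normal family θ_{i,k} by X^k = Σ_{i=1}^n λ_i^{1/2} θ_{i,k} u_i. Then the spectral diagonal approximation has expected squared Frobenius error no larger than that of the sample covariance: E[‖C − D^N‖_F²] ≤ E[‖C − C^N‖_F²], where C = Σ_{i=1}^n λ_i u_i u_iᵀ. -/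
/-!
In the eigenbasis `u` the matrix `C` is diagonal, and `c i = ⟨u i, C^N u i⟩` is the `i`-th diagonal
entry of `C^N` in that basis, so `D^N` is the pinching of `C^N` (its off-diagonal part in the basis
`u` erased) and `C - D^N` is the pinching of `C - C^N`. The squared Frobenius norm is invariant under
the orthogonal change of basis, so pinching can only decrease it: the inequality holds pointwise in
`ω`. Integrating it needs the right-hand side to be integrable (a non-integrable integrand would
have integral `0`), which follows from the finiteness of the fourth Gaussian moments.
-/

open MeasureTheory ProbabilityTheory Finset
open Matrix
open scoped NNReal

namespace Matrix

variable {α : Type*} [Fintype α]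

lemma sum_sum_sq_eq_trace_mul_transpose (A : Matrix α α ℝ) :
    ∑ a, ∑ b, A a b ^ 2 = trace (A * Aᵀ) := by
  simp [trace, mul_apply, sq]

lemma sum_sq_diag_le_sum_sum_sq (Q : Matrix α α ℝ) : ∑ i, Q i i ^ 2 ≤ ∑ i, ∑ j, Q i j ^ 2 :=
  sum_le_sum fun i _ =>
    single_le_sum (f := fun j => Q i j ^ 2) (fun _ _ => sq_nonneg _) (mem_univ i)

lemma mul_mul_transpose_apply_self (U M : Matrix α α ℝ) (i : α) :
    (U * M * Uᵀ) i i = ∑ a, ∑ b, U i a * M a b * U i b := by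
  simp only [mul_apply, transpose_apply, sum_mul]
  exact sum_comm

variable [DecidableEq α]

lemma sum_sum_sq_transpose_mul_mul {U : Matrix α α ℝ} (hU : U * Uᵀ = 1) (Q : Matrix α α ℝ) :
    ∑ a, ∑ b, (Uᵀ * Q * U) a b ^ 2 = ∑ i, ∑ j, Q i j ^ 2 := by
  rw [sum_sum_sq_eq_trace_mul_transpose, sum_sum_sq_eq_trace_mul_transpose]
  calc trace (Uᵀ * Q * U * (Uᵀ * Q * U)ᵀ)
      = trace (Uᵀ * Q * (U * Uᵀ) * Qᵀ * U) := by
        simp only [transpose_mul, transpose_transpose, Matrix.mul_assoc]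
    _ = trace (Uᵀ * (Q * Qᵀ * U)) := by simp only [hU, Matrix.mul_one, Matrix.mul_assoc]
    _ = trace (Q * Qᵀ * U * Uᵀ) := trace_mul_comm _ _
    _ = trace (Q * Qᵀ) := by rw [Matrix.mul_assoc, hU, Matrix.mul_one]

lemma sum_sum_sq_diagonal (d : α → ℝ) : ∑ a, ∑ b, diagonal d a b ^ 2 = ∑ i, d i ^ 2 := by
  simp [diagonal_apply, ite_pow]

lemma transpose_mul_diagonal_mul_apply (U : Matrix α α ℝ) (d : α → ℝ) (a b : α) :
    (Uᵀ * diagonal d * U) a b = ∑ i, d i * U i a * U i b := by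
  simp [mul_apply, diagonal_apply, mul_comm]

lemma sum_sum_sq_sub_pinching_le {U : Matrix α α ℝ} (hU : U * Uᵀ = 1) (lam : α → ℝ)
    (M : Matrix α α ℝ) :
    ∑ a, ∑ b, (Uᵀ * diagonal lam * U - Uᵀ * diagonal (fun i => (U * M * Uᵀ) i i) * U) a b ^ 2
      ≤ ∑ a, ∑ b, (Uᵀ * diagonal lam * U - M) a b ^ 2 := by
  have hUU : Uᵀ * U = 1 := mul_eq_one_comm.mp hU
  set Q := diagonal lam - U * M * Uᵀ
  have hM : M = Uᵀ * (U * M * Uᵀ) * U := by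
    simp only [← Matrix.mul_assoc, hUU, Matrix.one_mul]
    simp only [Matrix.mul_assoc, hUU, Matrix.mul_one]
  have hpinch : Uᵀ * diagonal lam * U - Uᵀ * diagonal (fun i => (U * M * Uᵀ) i i) * U
      = Uᵀ * diagonal (fun i => Q i i) * U := by
    rw [← Matrix.sub_mul, ← Matrix.mul_sub, diagonal_sub]
    congr 3
    ext i
    simp [Q]
  have hfull : Uᵀ * diagonal lam * U - M = Uᵀ * Q * U := by
    conv_lhs => rw [hM]
    rw [← Matrix.sub_mul, ← Matrix.mul_sub]
  rw [hpinch, hfull, sum_sum_sq_transpose_mul_mul hU, sum_sum_sq_transpose_mul_mul hU,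
    sum_sum_sq_diagonal]
  exact sum_sq_diag_le_sum_sum_sq Q

end Matrix

lemma sum_sum_mul_outer_mul_eq_sum_sq {α κ : Type*} [Fintype α] [Fintype κ] (v : α → ℝ)
    (Y : κ → α → ℝ) (s : ℝ) :
    ∑ a, ∑ b, v a * (s * ∑ k, Y k a * Y k b) * v b = s * ∑ k, (∑ a, v a * Y k a) ^ 2 := by
  simp only [sq, mul_sum, sum_mul]
  conv_rhs => rw [sum_comm]
  refine sum_congr rfl fun a _ => ?_
  conv_rhs => rw [sum_comm]
  exact sum_congr rfl fun b _ => sum_congr rfl fun k _ => by ring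

lemma memLp_of_map_eq_gaussianReal {Ω : Type*} [MeasurableSpace Ω] {P : Measure Ω} {f : Ω → ℝ}
    {μ : ℝ} {v : ℝ≥0} (h : P.map f = gaussianReal μ v) (p : ℝ≥0) : MemLp f p P := by
  have hf : AEMeasurable f P := AEMeasurable.of_map_ne_zero (h ▸ IsProbabilityMeasure.ne_zero _)
  exact (memLp_map_measure_iff aestronglyMeasurable_id hf).mp (h ▸ memLp_id_gaussianReal p)

lemma integrable_sum_sum_sq_sub_outer {Ω α κ : Type*} [MeasurableSpace Ω] {P : Measure Ω}
    [IsFiniteMeasure P] [Fintype α] [Fintype κ] {Y : κ → Ω → α → ℝ}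
    (hY : ∀ k a, MemLp (fun ω => Y k ω a) 4 P) (s : ℝ) (C : Matrix α α ℝ)
    {M : Ω → Matrix α α ℝ} (hM : ∀ ω a b, M ω a b = s * ∑ k, Y k ω a * Y k ω b) :
    Integrable (fun ω => ∑ a, ∑ b, (C a b - M ω a b) ^ 2) P := by
  have : ENNReal.HolderTriple 4 4 2 := ⟨by
    rw [← two_mul, show (4 : ENNReal) = 2 * 2 by norm_num, ENNReal.mul_inv (by simp) (by simp),
      ← mul_assoc, ENNReal.mul_inv_cancel (by simp) (by simp), one_mul]⟩
  refine integrable_finsetSum _ fun a _ => integrable_finsetSum _ fun b _ => ?_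
  have hMab : MemLp (fun ω => M ω a b) 2 P := by
    simp only [hM]
    exact (memLp_finsetSum _ fun k _ => (hY k b).mul (hY k a) (r := 2)).const_mul s
  exact ((memLp_const (C a b)).sub hMab).integrable_sq

theorem spectral_diagonal_error_le_sample_cov_error_general
    {Ω : Type*} [MeasureSpace Ω] [IsProbabilityMeasure (ℙ : Measure Ω)]
    (n N : ℕ)
    (θ : Fin n × Fin N → Ω → ℝ)
    (hgauss : ∀ p, Measure.map (θ p) ℙ = gaussianReal 0 1)
    (u : Fin n → Fin n → ℝ)
    (horth : ∀ i j, (∑ a, u i a * u j a) = if i = j then (1 : ℝ) else 0)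
    (lam : Fin n → ℝ)
    (X : Fin N → Ω → Fin n → ℝ)
    (hX : ∀ k ω a, X k ω a = ∑ i, Real.sqrt (lam i) * θ (i, k) ω * u i a)
    (Xbar : Ω → Fin n → ℝ)
    (hXbar : ∀ ω a, Xbar ω a = (1 / (N : ℝ)) * ∑ k, X k ω a)
    (CN : Ω → Matrix (Fin n) (Fin n) ℝ)
    (hCN : ∀ ω a b, CN ω a b =
      (1 / ((N : ℝ) - 1)) * ∑ k, (X k ω a - Xbar ω a) * (X k ω b - Xbar ω b))
    (c : Fin n → Ω → ℝ)
    (hc : ∀ i ω, c i ω = (1 / ((N : ℝ) - 1)) *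
      ∑ k, ((∑ a, u i a * X k ω a) - (∑ a, u i a * Xbar ω a)) ^ 2)
    (DN : Ω → Matrix (Fin n) (Fin n) ℝ)
    (hDN : ∀ ω a b, DN ω a b = ∑ i, c i ω * u i a * u i b)
    (C : Matrix (Fin n) (Fin n) ℝ)
    (hC : ∀ a b, C a b = ∑ i, lam i * u i a * u i b) :
    ∫ ω, (∑ a, ∑ b, (C a b - DN ω a b) ^ 2) ∂ℙ
      ≤ ∫ ω, (∑ a, ∑ b, (C a b - CN ω a b) ^ 2) ∂ℙ := by
  set U : Matrix (Fin n) (Fin n) ℝ := Matrix.of u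
  have hU : U * Uᵀ = 1 := by ext i j; simpa [U, mul_apply, one_apply] using horth i j
  have hCU : C = Uᵀ * diagonal lam * U := by
    ext a b; rw [hC, transpose_mul_diagonal_mul_apply]; rfl
  have hcU : ∀ i ω, c i ω = (U * CN ω * Uᵀ) i i := by
    intro i ω
    rw [hc, mul_mul_transpose_apply_self]
    simp only [hCN]
    rw [sum_sum_mul_outer_mul_eq_sum_sq (U i) (fun k a => X k ω a - Xbar ω a)]
    simp only [U, of_apply, mul_sub, sum_sub_distrib]
  have hDU : ∀ ω, DN ω = Uᵀ * diagonal (fun i => (U * CN ω * Uᵀ) i i) * U := by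
    intro ω; ext a b; rw [hDN, transpose_mul_diagonal_mul_apply]; simp only [hcU]; rfl
  have hθ : ∀ p, MemLp (θ p) 4 ℙ := fun p => memLp_of_map_eq_gaussianReal (hgauss p) 4
  have hXmem : ∀ k a, MemLp (fun ω => X k ω a) 4 ℙ := by
    intro k a
    simp only [hX]
    exact memLp_finsetSum _ fun i _ => ((hθ _).const_mul _).mul_const _
  have hXbarmem : ∀ a, MemLp (fun ω => Xbar ω a) 4 ℙ := by
    intro a
    simp only [hXbar]
    exact (memLp_finsetSum _ fun k _ => hXmem k a).const_mul _
  refine integral_mono_of_nonneg (ae_of_all _ fun ω => by positivity)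
    (integrable_sum_sum_sq_sub_outer (fun k a => (hXmem k a).sub (hXbarmem a)) _ C hCN)
    (ae_of_all _ fun ω => ?_)
  dsimp only
  rw [hCU, hDU]
  exact sum_sum_sq_sub_pinching_le hU lam (CN ω)

/-- the spectral diagonal approximation has expected squared Frobenius
error no larger than the sample covariance. -/
theorem spectral_diagonal_error_le_sample_cov_error
    {Ω : Type*} [MeasureSpace Ω] [IsProbabilityMeasure (ℙ : Measure Ω)]
    (n N : ℕ) (hn : 1 ≤ n) (hN : 2 ≤ N)
    (θ : Fin n × Fin N → Ω → ℝ)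
    (hmeas : ∀ p, Measurable (θ p))
    (hindep : iIndepFun θ ℙ)
    (hgauss : ∀ p, Measure.map (θ p) ℙ = gaussianReal 0 1)
    (u : Fin n → Fin n → ℝ)
    (horth : ∀ i j, (∑ a, u i a * u j a) = if i = j then (1 : ℝ) else 0)
    (lam : Fin n → ℝ) (hlam : ∀ i, 0 ≤ lam i)
    (X : Fin N → Ω → Fin n → ℝ)
    (hX : ∀ k ω a, X k ω a = ∑ i, Real.sqrt (lam i) * θ (i, k) ω * u i a)
    (Xbar : Ω → Fin n → ℝ)
    (hXbar : ∀ ω a, Xbar ω a = (1 / (N : ℝ)) * ∑ k, X k ω a)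
    (CN : Ω → Matrix (Fin n) (Fin n) ℝ)
    (hCN : ∀ ω a b, CN ω a b =
      (1 / ((N : ℝ) - 1)) * ∑ k, (X k ω a - Xbar ω a) * (X k ω b - Xbar ω b))
    (c : Fin n → Ω → ℝ)
    (hc : ∀ i ω, c i ω = (1 / ((N : ℝ) - 1)) *
      ∑ k, ((∑ a, u i a * X k ω a) - (∑ a, u i a * Xbar ω a)) ^ 2)
    (DN : Ω → Matrix (Fin n) (Fin n) ℝ)
    (hDN : ∀ ω a b, DN ω a b = ∑ i, c i ω * u i a * u i b)
    (C : Matrix (Fin n) (Fin n) ℝ)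
    (hC : ∀ a b, C a b = ∑ i, lam i * u i a * u i b) :
    ∫ ω, (∑ a, ∑ b, (C a b - DN ω a b) ^ 2) ∂ℙ
      ≤ ∫ ω, (∑ a, ∑ b, (C a b - CN ω a b) ^ 2) ∂ℙ :=
  spectral_diagonal_error_le_sample_cov_error_general n N θ hgauss u horth lam X hX Xbar hXbar CN
    hCN c hc DN hDN C hC
end

section
/- For real α > 1, define R(α) = (2 Σ_{k=1}^∞ k^{−2α}) / (Σ_{k=1}^∞ k^{−2α} + (Σ_{k=1}^∞ k^{−α})²), the ratio of the expected squared error of the spectral diagonal approximation to that of the sample covariance when the covariance eigenvalues obey the power law λ_k = k^{−α}. Then R(α) → 0 as α → 1 from the right. -/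
/-!
With `S α = ∑ k^{-α}` and `T α = ∑ k^{-2α}` we have `0 ≤ T ≤ S`, so the ratio is at most
`2T / S² ≤ 2 / S`. The residue `(α - 1) ζ(α) → 1` of the zeta function at its pole makes
`S α = ζ(α)` blow up as `α → 1⁺`.
-/

open Filter Topology

theorem two_mul_div_add_sq_le_two_div {K : Type*} [Field K] [LinearOrder K]
    [IsStrictOrderedRing K] {t s : K} (ht : 0 ≤ t) (hts : t ≤ s) :
    2 * t / (t + s ^ 2) ≤ 2 / s := by
  rcases (ht.trans hts).eq_or_lt with rfl | hs
  · simp [le_antisymm hts ht]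
  · rw [div_le_div_iff₀ (by positivity) hs]
    nlinarith

theorem summable_pnat_rpow_neg {α : ℝ} (hα : 1 < α) :
    Summable fun k : ℕ+ => (k : ℝ) ^ (-α) :=
  (Real.summable_nat_rpow.2 (neg_lt_neg hα)).comp_injective PNat.coe_injective

theorem tsum_pnat_rpow_neg_le_of_le {α β : ℝ} (hα : 1 < α) (hαβ : α ≤ β) :
    ∑' k : ℕ+, (k : ℝ) ^ (-β) ≤ ∑' k : ℕ+, (k : ℝ) ^ (-α) :=
  (summable_pnat_rpow_neg (hα.trans_le hαβ)).tsum_le_tsum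
    (fun k => Real.rpow_le_rpow_of_exponent_le (Nat.one_le_cast.2 k.pos) (neg_le_neg hαβ))
    (summable_pnat_rpow_neg hα)

theorem tendsto_tsum_pnat_rpow_neg_nhdsGT_one :
    Tendsto (fun α : ℝ => ∑' k : ℕ+, (k : ℝ) ^ (-α)) (𝓝[>] 1) atTop := by
  have hpole : Tendsto (fun α : ℝ => (α - 1)⁻¹) (𝓝[>] 1) atTop :=
    tendsto_inv_nhdsGT_zero.comp <| tendsto_nhdsWithin_of_tendsto_nhds_of_eventually_within _
      (((continuous_sub_right 1).tendsto' 1 0 (sub_self 1)).mono_left nhdsWithin_le_nhds)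
      (eventually_nhdsWithin_of_forall fun _ h => sub_pos.2 (Set.mem_Ioi.1 h))
  refine (tendsto_sub_mul_tsum_nat_rpow.pos_mul_atTop one_pos hpole).congr' ?_
  filter_upwards [self_mem_nhdsWithin] with α (hα : 1 < α)
  rw [tsum_pnat_eq_tsum_of_eq_zero (f := fun n : ℕ => (n : ℝ) ^ (-α))
    (by simp [Real.zero_rpow, (zero_lt_one.trans hα).ne'])]
  simp only [one_div, Real.rpow_neg (Nat.cast_nonneg _)]
  field_simp [(sub_pos.2 hα).ne']

/-- the error ratio of the spectral diagonal approximation to the sample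
covariance under the power law λ_k = k^(-α) tends to 0 as α → 1 from the right. -/
theorem error_ratio_tendsto_zero :
    Tendsto (fun α : ℝ =>
        (2 * ∑' k : ℕ+, (k : ℝ) ^ (-(2 * α))) /
          ((∑' k : ℕ+, (k : ℝ) ^ (-(2 * α))) + (∑' k : ℕ+, (k : ℝ) ^ (-α)) ^ 2))
      (nhdsWithin 1 (Set.Ioi 1)) (nhds 0) := by
  refine tendsto_of_tendsto_of_tendsto_of_le_of_le' tendsto_const_nhds
    ((tendsto_const_nhds (x := (2 : ℝ))).div_atTop tendsto_tsum_pnat_rpow_neg_nhdsGT_one) ?_ ?_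
  all_goals
    filter_upwards [self_mem_nhdsWithin] with α (hα : 1 < α)
    have hT : 0 ≤ ∑' k : ℕ+, (k : ℝ) ^ (-(2 * α)) := tsum_nonneg fun k => by positivity
  · positivity
  · exact two_mul_div_add_sq_le_two_div hT (tsum_pnat_rpow_neg_le_of_le hα (by linarith))
end
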